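/- For every c > 0 and every ū₀ ∈ [0,1], setting u₁ = V₁(c,ū₀), u₂ = V₂(c,ū₀) and μ̄ = (u₁ − u₂ + 1 + ū₀)/3, one has −1 < u₁ − u₂ < 1, μ̄ ∈ [0,1], and for every u₀ ∈ [0,1] the bound 0 ≤ (μ̄ + (u₁ − u₂) + u₀ + 1)/4 ≤ 1 holds. -/

import Mathlib

/-!
Clearing denominators, `V1 - V2 = (N + (1 - 2u) Δ) / (AB)` with `AB = 2(2 + 3c)(3 + 3c + u)`
and `N = 3 + 3c - 5u - 6cu - 2u²`, so `|V1 - V2| < 1` amounts to `|(1 - 2u) Δ| < AB ± N`.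
Both right-hand sides are positive; squaring and multiplying by `4 + 3c - u` (the denominator
inside `Δ`) turns each into a polynomial inequality in `c ≥ 0`, `u ∈ [0, 1]`, whose two sides
differ by a sum of nonnegative terms in `c`, `u`, `1 - u^k`, `u - u^k`.
The remaining claims are linear consequences of `-1 < V1 - V2 < 1`.
-/

/-- Discriminant-type quantity appearing in the Multi-Leader-Follower equilibrium. -/
noncomputable def Delta (c u : ℝ) : ℝ :=
  Real.sqrt ((3 + 3 * c + u) * (36 + 57 * c + 9 * c ^ 2 + u - u ^ 2) / (4 + 3 * c - u))

/-- Multi-Leader-Follower equilibrium advertisement efficiency of major player 2. -/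
noncomputable def V2 (c u : ℝ) : ℝ :=
  (-1 - 3 * c + u + Delta c u) / (2 * (2 + 3 * c))

/-- Multi-Leader-Follower equilibrium advertisement efficiency of major player 1. -/
noncomputable def V1 (c u : ℝ) : ℝ :=
  (1 / (3 + 3 * c + u)) *
    (1 - 2 * u + (1 + 3 * c - u - Delta c u) * (u - 3 * c - 4) / (2 * (2 + 3 * c)))

theorem abs_mul_lt_of_sq_mul_lt {a s d q p : ℝ} (hd : 0 < d) (hp : 0 < p)
    (hs : s ^ 2 * d = q) (h : a ^ 2 * q < p ^ 2 * d) : |a * s| < p := by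
  refine abs_lt_of_sq_lt_sq ?_ hp.le
  rw [← mul_lt_mul_iff_of_pos_right hd, mul_pow, mul_assoc, hs]
  exact h

section

variable {c u : ℝ}

theorem Delta_sq_mul (hc : 0 ≤ c) (hu₀ : 0 ≤ u) (hu₁ : u ≤ 1) :
    Delta c u ^ 2 * (4 + 3 * c - u) =
      (3 + 3 * c + u) * (36 + 57 * c + 9 * c ^ 2 + u - u ^ 2) := by
  have hd : 0 < 4 + 3 * c - u := by linarith
  have hq : 0 < 36 + 57 * c + 9 * c ^ 2 + u - u ^ 2 := by nlinarith
  rw [Delta, Real.sq_sqrt (by positivity), div_mul_cancel₀ _ hd.ne']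

theorem V1_sub_V2 (hc : 0 ≤ c) (hu₀ : 0 ≤ u) :
    V1 c u - V2 c u =
      (3 + 3 * c - 5 * u - 6 * c * u - 2 * u ^ 2 + (1 - 2 * u) * Delta c u) /
        (2 * (2 + 3 * c) * (3 + 3 * c + u)) := by
  have : 0 < 2 + 3 * c := by linarith
  have : 0 < 3 + 3 * c + u := by linarith
  rw [V1, V2]
  field_simp
  ring

theorem sq_mul_lt_lower (hc : 0 ≤ c) (hu₀ : 0 ≤ u) (hu₁ : u ≤ 1) :
    (1 - 2 * u) ^ 2 * ((3 + 3 * c + u) * (36 + 57 * c + 9 * c ^ 2 + u - u ^ 2))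
      < (15 + 33 * c + 18 * c ^ 2 - u - 2 * u ^ 2) ^ 2 * (4 + 3 * c - u) := by
  have key : (15 + 33 * c + 18 * c ^ 2 - u - 2 * u ^ 2) ^ 2 * (4 + 3 * c - u)
      - (1 - 2 * u) ^ 2 * ((3 + 3 * c + u) * (36 + 57 * c + 9 * c ^ 2 + u - u ^ 2))
      = 224 + 48 * u + 16 * u ^ 4 + 480 * (1 - u ^ 2) + 88 * (1 - u ^ 3)
        + c * (2448 + 24 * u ^ 4) + 288 * (c * (1 - u)) + 1512 * (c * (1 - u ^ 2))
        + 108 * (c * (1 - u ^ 3))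
        + c ^ 2 * (6696 + 36 * u ^ 3) + 1188 * (c ^ 2 * (1 - u)) + 1404 * (c ^ 2 * (1 - u ^ 2))
        + c ^ 3 * 8100 + 1188 * (c ^ 3 * (1 - u)) + 324 * (c ^ 3 * (1 - u ^ 2))
        + c ^ 4 * 4536 + 324 * (c ^ 4 * (1 - u)) + 972 * c ^ 5 := by ring
  have h₁ : 0 ≤ 1 - u := by linarith
  have h₂ : 0 ≤ 1 - u ^ 2 := by nlinarith
  have h₃ : 0 ≤ 1 - u ^ 3 := by nlinarith
  have hc₂ : 0 ≤ c ^ 2 := by positivity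
  have hc₃ : 0 ≤ c ^ 3 := by positivity
  have hc₄ : 0 ≤ c ^ 4 := by positivity
  linarith [mul_nonneg hc (pow_nonneg hu₀ 4), mul_nonneg hc h₁, mul_nonneg hc h₂,
    mul_nonneg hc h₃, mul_nonneg hc₂ (pow_nonneg hu₀ 3), mul_nonneg hc₂ h₁, mul_nonneg hc₂ h₂,
    mul_nonneg hc₃ h₁, mul_nonneg hc₃ h₂, mul_nonneg hc₄ h₁, pow_nonneg hc 5,
    pow_nonneg hu₀ 4]

theorem sq_mul_lt_upper (hc : 0 ≤ c) (hu₀ : 0 ≤ u) (hu₁ : u ≤ 1) :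
    (1 - 2 * u) ^ 2 * ((3 + 3 * c + u) * (36 + 57 * c + 9 * c ^ 2 + u - u ^ 2))
      < (9 + 27 * c + 18 * c ^ 2 + 9 * u + 12 * c * u + 2 * u ^ 2) ^ 2 * (4 + 3 * c - u) := by
  have key : (9 + 27 * c + 18 * c ^ 2 + 9 * u + 12 * c * u + 2 * u ^ 2) ^ 2 * (4 + 3 * c - u)
      - (1 - 2 * u) ^ 2 * ((3 + 3 * c + u) * (36 + 57 * c + 9 * c ^ 2 + u - u ^ 2))
      = 216 + 808 * u + 32 * u ^ 2 + 136 * (u - u ^ 3) + 16 * (u - u ^ 4)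
        + c * (1908 + 3564 * u + 72 * u ^ 2) + 276 * (c * (u - u ^ 3)) + 24 * (c * (u - u ^ 4))
        + c ^ 2 * (5472 + 5616 * u + 108 * u ^ 2) + 108 * (c ^ 2 * (u - u ^ 3))
        + c ^ 3 * (7020 + 3780 * u + 108 * u ^ 2) + c ^ 4 * (4212 + 972 * u)
        + 972 * c ^ 5 := by ring
  have h₃ : 0 ≤ u - u ^ 3 := by nlinarith
  have h₄ : 0 ≤ u - u ^ 4 := by nlinarith
  have hc₂ : 0 ≤ c ^ 2 := by positivity
  linarith [mul_nonneg hc h₃, mul_nonneg hc h₄, mul_nonneg hc₂ h₃,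
    mul_nonneg hc (by positivity : (0 : ℝ) ≤ 1908 + 3564 * u + 72 * u ^ 2),
    mul_nonneg hc₂ (by positivity : (0 : ℝ) ≤ 5472 + 5616 * u + 108 * u ^ 2),
    mul_nonneg (pow_nonneg hc 3) (by positivity : (0 : ℝ) ≤ 7020 + 3780 * u + 108 * u ^ 2),
    mul_nonneg (pow_nonneg hc 4) (by positivity : (0 : ℝ) ≤ 4212 + 972 * u),
    pow_nonneg hc 5, sq_nonneg u]

theorem abs_V1_sub_V2_lt_one (hc : 0 ≤ c) (hu₀ : 0 ≤ u) (hu₁ : u ≤ 1) :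
    |V1 c u - V2 c u| < 1 := by
  have hd : 0 < 4 + 3 * c - u := by linarith
  have hden : 0 < 2 * (2 + 3 * c) * (3 + 3 * c + u) := by positivity
  have hΔ := Delta_sq_mul hc hu₀ hu₁
  have hlo := abs_mul_lt_of_sq_mul_lt hd (by nlinarith) hΔ (sq_mul_lt_lower hc hu₀ hu₁)
  have hhi := abs_mul_lt_of_sq_mul_lt hd (by nlinarith) hΔ (sq_mul_lt_upper hc hu₀ hu₁)
  rw [V1_sub_V2 hc hu₀, abs_div, abs_of_pos hden, div_lt_one hden, abs_lt]
  constructor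
  · linarith [neg_abs_le ((1 - 2 * u) * Delta c u)]
  · linarith [le_abs_self ((1 - 2 * u) * Delta c u)]

end

theorem stmt_17 (c ubar₀ : ℝ) (hc : 0 < c) (h₀ : ubar₀ ∈ Set.Icc (0 : ℝ) 1) :
    -1 < V1 c ubar₀ - V2 c ubar₀ ∧ V1 c ubar₀ - V2 c ubar₀ < 1 ∧
    (V1 c ubar₀ - V2 c ubar₀ + 1 + ubar₀) / 3 ∈ Set.Icc (0 : ℝ) 1 ∧
    ∀ u₀ ∈ Set.Icc (0 : ℝ) 1,
      0 ≤ ((V1 c ubar₀ - V2 c ubar₀ + 1 + ubar₀) / 3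
            + (V1 c ubar₀ - V2 c ubar₀) + u₀ + 1) / 4 ∧
      ((V1 c ubar₀ - V2 c ubar₀ + 1 + ubar₀) / 3
            + (V1 c ubar₀ - V2 c ubar₀) + u₀ + 1) / 4 ≤ 1 := by
  obtain ⟨hu₀, hu₁⟩ := h₀
  obtain ⟨hlo, hhi⟩ := abs_lt.mp (abs_V1_sub_V2_lt_one hc.le hu₀ hu₁)
  refine ⟨hlo, hhi, ⟨by linarith, by linarith⟩, fun u₀ ⟨h0, h1⟩ => ⟨by linarith, by linarith⟩⟩
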